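/- arXiv:0905.0895 — 8 statements merged into one kernel-verified Lean document; each statement's English description precedes it below -/
import Mathlib

section
/- Let A be a ℂ-algebra with invertible elements Y, Z satisfying ZY = q²YZ (q ≠ 0), a ∈ ℂ nonzero, and let ρ be the algebra map determined by ρ(Y) = aY⁻¹Z, ρ(Z) = Y⁻¹ (assuming it is well-defined as a homomorphism to A). Then ρ∘ρ∘ρ fixes Y and Z, i.e. ρ³(Y) = Y and ρ³(Z) = Z. -/
theorem stmt2 {A : Type*} [Ring A] [Algebra ℂ A]
    (Y Z : Aˣ) (q a : ℂ) (hq : q ≠ 0) (ha : a ≠ 0)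
    (h : (Z : A) * Y = q ^ 2 • ((Y : A) * Z))
    (ρ : A →ₐ[ℂ] A)
    (hY : ρ Y = a • ((↑Y⁻¹ : A) * Z))
    (hZ : ρ Z = (↑Y⁻¹ : A)) :
    ρ (ρ (ρ (Y : A))) = Y ∧ ρ (ρ (ρ (Z : A))) = Z := by
  have hYl : ρ (↑Y⁻¹ : A) * ρ (Y : A) = 1 := by
    rw [← map_mul]; simp
  have hZl : ρ (↑Z⁻¹ : A) * ρ (Z : A) = 1 := by
    rw [← map_mul]; simp
  -- candidate inverse for ρ Y
  have hcand : ρ (Y : A) * (a⁻¹ • ((↑Z⁻¹ : A) * Y)) = 1 := by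
    rw [hY, smul_mul_smul_comm]
    rw [mul_assoc, ← mul_assoc (Z : A)]
    simp [mul_inv_cancel₀ ha]
  have hYinv : ρ (↑Y⁻¹ : A) = a⁻¹ • ((↑Z⁻¹ : A) * Y) := by
    calc ρ (↑Y⁻¹ : A) = ρ (↑Y⁻¹ : A) * (ρ (Y : A) * (a⁻¹ • ((↑Z⁻¹ : A) * Y))) := by
          rw [hcand, mul_one]
      _ = (ρ (↑Y⁻¹ : A) * ρ (Y : A)) * (a⁻¹ • ((↑Z⁻¹ : A) * Y)) := by rw [mul_assoc]
      _ = a⁻¹ • ((↑Z⁻¹ : A) * Y) := by rw [hYl, one_mul]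
  have hZinv : ρ (↑Z⁻¹ : A) = (Y : A) := by
    calc ρ (↑Z⁻¹ : A) = ρ (↑Z⁻¹ : A) * (ρ (Z : A) * Y) := by
          rw [hZ]; simp
      _ = (ρ (↑Z⁻¹ : A) * ρ (Z : A)) * Y := by rw [mul_assoc]
      _ = Y := by rw [hZl, one_mul]
  have hY2 : ρ (ρ (Y : A)) = (↑Z⁻¹ : A) := by
    rw [hY, map_smul, map_mul, hYinv, hZ, smul_mul_assoc, smul_smul,
      mul_inv_cancel₀ ha, one_smul, mul_assoc]
    simp
  have hZ2 : ρ (ρ (Z : A)) = a⁻¹ • ((↑Z⁻¹ : A) * Y) := by rw [hZ, hYinv]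
  constructor
  · rw [hY2, hZinv]
  · rw [hZ2, map_smul, map_mul, hZinv, hY, mul_smul_comm, smul_smul,
      inv_mul_cancel₀ ha, one_smul, ← mul_assoc]
    simp
end

section
/- With Kashaev relations as above and bY_iY_j + Z_iZ_j invertible, set Y_i' = (bY_iY_j+Z_iZ_j)⁻¹Z_j, Z_i' = b(bY_iY_j+Z_iZ_j)⁻¹Y_i, Y_j' = (bY_iY_j+Z_iZ_j)⁻¹Z_i, Z_j' = b(bY_iY_j+Z_iZ_j)⁻¹Y_j. Then Z_i'Y_i' = q²Y_i'Z_i'. -/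
theorem stmt4 {A : Type*} [Ring A] [Algebra ℂ A]
    (Yi Zi Yj Zj : Aˣ) (q b : ℂ) (hq : q ≠ 0) (hb : b ≠ 0)
    (hYY : (Yi : A) * Yj = (Yj : A) * Yi)
    (hZZ : (Zi : A) * Zj = (Zj : A) * Zi)
    (hYZ : (Yi : A) * Zj = (Zj : A) * Yi)
    (hYZ' : (Yj : A) * Zi = (Zi : A) * Yj)
    (hi : (Zi : A) * Yi = q ^ 2 • ((Yi : A) * Zi))
    (hj : (Zj : A) * Yj = q ^ 2 • ((Yj : A) * Zj))
    (Dinv : A)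
    (hD1 : Dinv * (b • ((Yi : A) * Yj) + (Zi : A) * Zj) = 1)
    (hD2 : (b • ((Yi : A) * Yj) + (Zi : A) * Zj) * Dinv = 1) :
    (b • (Dinv * Yi)) * (Dinv * Zj) = q ^ 2 • ((Dinv * Zj) * (b • (Dinv * Yi))) := by
  have hq2 : (q ^ 2 : ℂ) ≠ 0 := pow_ne_zero _ hq
  set D : A := b • ((Yi : A) * Yj) + (Zi : A) * Zj with hDdef
  set E : A := (q ^ 2 * b) • ((Yi : A) * Yj) + (Zi : A) * Zj with hEdef
  -- h1 : q^2 • (Yi * D) = E * Yi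
  have h1 : q ^ 2 • ((Yi : A) * D) = E * (Yi : A) := by
    rw [hDdef, hEdef, mul_add, add_mul, smul_add]
    congr 1
    · rw [mul_smul_comm, smul_mul_assoc, smul_smul]
      congr 1
      rw [mul_assoc, ← hYY, ← mul_assoc]
    · calc q ^ 2 • ((Yi : A) * ((Zi : A) * (Zj : A)))
          = (q ^ 2 • ((Yi : A) * (Zi : A))) * (Zj : A) := by
            rw [smul_mul_assoc, mul_assoc]
        _ = (Zi : A) * (Yi : A) * (Zj : A) := by rw [← hi]
        _ = (Zi : A) * ((Zj : A) * (Yi : A)) := by rw [mul_assoc, ← hYZ]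
        _ = (Zi : A) * (Zj : A) * (Yi : A) := by rw [mul_assoc]
  have h2 : (Zj : A) * D = E * (Zj : A) := by
    rw [hDdef, hEdef, mul_add, add_mul]
    congr 1
    · calc (Zj : A) * (b • ((Yi : A) * (Yj : A)))
          = b • ((Zj : A) * (Yi : A) * (Yj : A)) := by
            rw [mul_smul_comm, mul_assoc]
        _ = b • ((Yi : A) * ((Zj : A) * (Yj : A))) := by rw [← hYZ, mul_assoc]
        _ = b • ((Yi : A) * (q ^ 2 • ((Yj : A) * (Zj : A)))) := by rw [hj]
        _ = (q ^ 2 * b) • ((Yi : A) * (Yj : A)) * (Zj : A) := by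
            rw [mul_smul_comm, smul_smul, mul_comm b, smul_mul_assoc, mul_assoc]
    · rw [← mul_assoc, ← hZZ, mul_assoc]
  have hE : E = q ^ 2 • ((Yi : A) * D * (↑Yi⁻¹ : A)) := by
    calc E = E * (Yi : A) * (↑Yi⁻¹ : A) := by
          rw [mul_assoc, Units.mul_inv, mul_one]
      _ = q ^ 2 • ((Yi : A) * D) * (↑Yi⁻¹ : A) := by rw [h1]
      _ = q ^ 2 • ((Yi : A) * D * (↑Yi⁻¹ : A)) := by rw [smul_mul_assoc]
  obtain ⟨Einv, hEinvdef⟩ : ∃ x : A, x = (q ^ 2)⁻¹ • ((Yi : A) * Dinv * (↑Yi⁻¹ : A)) :=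
    ⟨_, rfl⟩
  have hEinvE : Einv * E = 1 := by
    rw [hEinvdef, hE, smul_mul_assoc, mul_smul_comm, smul_smul,
      inv_mul_cancel₀ hq2, one_smul]
    calc (Yi : A) * Dinv * (↑Yi⁻¹ : A) * ((Yi : A) * D * (↑Yi⁻¹ : A))
        = (Yi : A) * Dinv * ((↑Yi⁻¹ : A) * (Yi : A)) * (D * (↑Yi⁻¹ : A)) := by
          simp only [mul_assoc]
      _ = (Yi : A) * (Dinv * D) * (↑Yi⁻¹ : A) := by
          rw [Units.inv_mul, mul_one]; simp only [mul_assoc]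
      _ = 1 := by rw [hD1, mul_one, Units.mul_inv]
  have key : (Yi : A) * Dinv = q ^ 2 • (Einv * (Yi : A)) := by
    rw [hEinvdef, smul_mul_assoc, smul_smul, mul_inv_cancel₀ hq2, one_smul,
      mul_assoc, Units.inv_mul, mul_one]
  have key2 : (Zj : A) * Dinv = Einv * (Zj : A) := by
    calc (Zj : A) * Dinv = Einv * E * ((Zj : A) * Dinv) := by
          rw [hEinvE, one_mul]
      _ = Einv * (E * (Zj : A)) * Dinv := by simp only [mul_assoc]
      _ = Einv * ((Zj : A) * D) * Dinv := by rw [← h2]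
      _ = Einv * (Zj : A) * (D * Dinv) := by simp only [mul_assoc]
      _ = Einv * (Zj : A) := by rw [hD2, mul_one]
  calc (b • (Dinv * (Yi : A))) * (Dinv * (Zj : A))
      = b • (Dinv * ((Yi : A) * Dinv) * (Zj : A)) := by
        rw [smul_mul_assoc]; simp only [mul_assoc]
    _ = b • (Dinv * (q ^ 2 • (Einv * (Yi : A))) * (Zj : A)) := by rw [key]
    _ = (b * q ^ 2) • (Dinv * Einv * ((Yi : A) * (Zj : A))) := by
        rw [mul_smul_comm, smul_mul_assoc, smul_smul]; simp only [mul_assoc]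
    _ = (b * q ^ 2) • (Dinv * Einv * ((Zj : A) * (Yi : A))) := by rw [hYZ]
    _ = q ^ 2 • ((Dinv * (Zj : A)) * (b • (Dinv * (Yi : A)))) := by
        rw [mul_smul_comm, smul_smul, mul_comm (q ^ 2) b]
        congr 1
        rw [mul_assoc Dinv (Zj : A), ← mul_assoc (Zj : A), key2]
        simp only [mul_assoc]
end

section
/- With the same setup (Kashaev relations, D = bY_iY_j + Z_iZ_j invertible), the primed elements Y_i' = D⁻¹Z_j and Y_j' = D⁻¹Z_i commute: Y_i'Y_j' = Y_j'Y_i'. -/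
theorem stmt5 {A : Type*} [Ring A] [Algebra ℂ A]
    (Yi Zi Yj Zj : Aˣ) (q b : ℂ) (hq : q ≠ 0) (hb : b ≠ 0)
    (hYY : (Yi : A) * Yj = (Yj : A) * Yi)
    (hZZ : (Zi : A) * Zj = (Zj : A) * Zi)
    (hYZ : (Yi : A) * Zj = (Zj : A) * Yi)
    (hYZ' : (Yj : A) * Zi = (Zi : A) * Yj)
    (hi : (Zi : A) * Yi = q ^ 2 • ((Yi : A) * Zi))
    (hj : (Zj : A) * Yj = q ^ 2 • ((Yj : A) * Zj))
    (Dinv : A)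
    (hD1 : Dinv * (b • ((Yi : A) * Yj) + (Zi : A) * Zj) = 1)
    (hD2 : (b • ((Yi : A) * Yj) + (Zi : A) * Zj) * Dinv = 1) :
    (Dinv * Zj) * (Dinv * Zi) = (Dinv * Zi) * (Dinv * Zj) := by
  set D : A := b • ((Yi : A) * Yj) + (Zi : A) * Zj with hDdef
  set E : A := (q ^ 2 * b) • ((Yi : A) * Yj) + (Zi : A) * Zj with hEdef
  have h1i : (Zi : A) * (b • ((Yi : A) * Yj))
      = ((q ^ 2 * b) • ((Yi : A) * Yj)) * (Zi : A) := by
    rw [mul_smul_comm, ← mul_assoc, hi, smul_mul_assoc, smul_smul, mul_comm b,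
      smul_mul_assoc]
    congr 1
    rw [mul_assoc, mul_assoc, hYZ']
  have h1j : (Zj : A) * (b • ((Yi : A) * Yj))
      = ((q ^ 2 * b) • ((Yi : A) * Yj)) * (Zj : A) := by
    rw [mul_smul_comm, ← mul_assoc, ← hYZ, mul_assoc, hj, mul_smul_comm,
      smul_smul, mul_comm b, smul_mul_assoc]
    congr 1
    rw [mul_assoc]
  have h2i : (Zi : A) * ((Zi : A) * Zj) = ((Zi : A) * Zj) * Zi := by
    conv_lhs => rw [hZZ, ← mul_assoc]
  have h2j : (Zj : A) * ((Zi : A) * Zj) = ((Zi : A) * Zj) * Zj := by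
    rw [← mul_assoc, ← hZZ]
  have hiD : (Zi : A) * D = E * Zi := by
    rw [hDdef, hEdef, mul_add, add_mul, h1i, h2i]
  have hjD : (Zj : A) * D = E * Zj := by
    rw [hDdef, hEdef, mul_add, add_mul, h1j, h2j]
  set ei : A := (Zi : A) * Dinv * (Zi⁻¹ : Aˣ) with hei
  set ej : A := (Zj : A) * Dinv * (Zj⁻¹ : Aˣ) with hej
  have heiE : ei * E = 1 := by
    have h1 : ((Zi⁻¹ : Aˣ) : A) * E = D * (Zi⁻¹ : Aˣ) := by
      calc ((Zi⁻¹ : Aˣ) : A) * E = (Zi⁻¹ : Aˣ) * (E * Zi) * (Zi⁻¹ : Aˣ) := by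
            rw [mul_assoc ((Zi⁻¹ : Aˣ) : A), mul_assoc, Units.mul_inv, mul_one]
        _ = (Zi⁻¹ : Aˣ) * (Zi * D) * (Zi⁻¹ : Aˣ) := by rw [hiD]
        _ = D * (Zi⁻¹ : Aˣ) := by rw [← mul_assoc, Units.inv_mul, one_mul]
    rw [hei, mul_assoc ((Zi : A) * Dinv), h1, ← mul_assoc, mul_assoc (Zi : A),
      hD1, mul_one, Units.mul_inv]
  have hEej : E * ej = 1 := by
    rw [hej, ← mul_assoc, ← mul_assoc, ← hjD, mul_assoc (Zj : A) D Dinv, hD2,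
      mul_one, Units.mul_inv]
  have heq : ei = ej := left_inv_eq_right_inv heiE hEej
  have hZjD : (Zj : A) * Dinv = ej * Zj := by
    rw [hej, mul_assoc, Units.inv_mul, mul_one]
  have hZiD : (Zi : A) * Dinv = ei * Zi := by
    rw [hei, mul_assoc, Units.inv_mul, mul_one]
  calc (Dinv * (Zj : A)) * (Dinv * Zi)
      = Dinv * (((Zj : A) * Dinv) * Zi) := by
        rw [mul_assoc, ← mul_assoc (Zj : A)]
    _ = Dinv * ((ej * Zj) * Zi) := by rw [hZjD]
    _ = Dinv * (ej * ((Zj : A) * Zi)) := by rw [mul_assoc ej (Zj : A) (Zi : A)]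
    _ = Dinv * (ei * ((Zi : A) * Zj)) := by rw [heq, hZZ]
    _ = Dinv * ((ei * Zi) * Zj) := by rw [← mul_assoc ei (Zi : A) (Zj : A)]
    _ = Dinv * (((Zi : A) * Dinv) * Zj) := by rw [hZiD]
    _ = (Dinv * Zi) * (Dinv * Zj) := by
        rw [← mul_assoc, ← mul_assoc Dinv (Zi : A) Dinv, mul_assoc]
end

section
/- With the same setup, Y_i' = D⁻¹Z_j and Z_j' = bD⁻¹Y_j commute: Y_i'Z_j' = Z_j'Y_i'. -/
theorem stmt6 {A : Type*} [Ring A] [Algebra ℂ A]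
    (Yi Zi Yj Zj : Aˣ) (q b : ℂ) (hq : q ≠ 0) (hb : b ≠ 0)
    (hYY : (Yi : A) * Yj = (Yj : A) * Yi)
    (hZZ : (Zi : A) * Zj = (Zj : A) * Zi)
    (hYZ : (Yi : A) * Zj = (Zj : A) * Yi)
    (hYZ' : (Yj : A) * Zi = (Zi : A) * Yj)
    (hi : (Zi : A) * Yi = q ^ 2 • ((Yi : A) * Zi))
    (hj : (Zj : A) * Yj = q ^ 2 • ((Yj : A) * Zj))
    (Dinv : A)
    (hD1 : Dinv * (b • ((Yi : A) * Yj) + (Zi : A) * Zj) = 1)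
    (hD2 : (b • ((Yi : A) * Yj) + (Zi : A) * Zj) * Dinv = 1) :
    (Dinv * Zj) * (b • (Dinv * Yj)) = (b • (Dinv * Yj)) * (Dinv * Zj) := by
  set D : A := b • ((Yi : A) * Yj) + (Zi : A) * Zj with hDdef
  set D' : A := (q ^ 2 * b) • ((Yi : A) * Yj) + (Zi : A) * Zj with hD'def
  have hZD : (Zj : A) * D = D' * Zj := by
    have h1 : (Zj : A) * ((Yi : A) * Yj) = q ^ 2 • ((Yi : A) * Yj * Zj) := by
      rw [← mul_assoc, ← hYZ, mul_assoc, hj, mul_smul_comm, mul_assoc]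
    have h2 : (Zj : A) * ((Zi : A) * Zj) = (Zi : A) * Zj * Zj := by
      rw [← mul_assoc, ← hZZ]
    rw [hDdef, hD'def, mul_add, add_mul, mul_smul_comm, h1, h2, smul_smul,
      smul_mul_assoc, mul_comm b (q ^ 2)]
  have hYD : D' * (Yj : A) = q ^ 2 • ((Yj : A) * D) := by
    have h3 : (Yj : A) * ((Yi : A) * Yj) = (Yi : A) * Yj * Yj := by
      rw [← mul_assoc, ← hYY]
    have h4 : (Zi : A) * Zj * Yj = q ^ 2 • ((Yj : A) * ((Zi : A) * Zj)) := by
      rw [mul_assoc, hj, mul_smul_comm, ← mul_assoc, ← hYZ', mul_assoc]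
    rw [hDdef, hD'def, add_mul, mul_add, smul_add, h4, mul_smul_comm, h3,
      smul_smul, smul_mul_assoc]
  set Dinv' : A := (Zj : A) * Dinv * ((Zj⁻¹ : Aˣ) : A) with hDinv'def
  have hZinv : ((Zj⁻¹ : Aˣ) : A) * (Zj : A) = 1 := Zj.inv_mul
  have hZinv' : (Zj : A) * ((Zj⁻¹ : Aˣ) : A) = 1 := Zj.mul_inv
  have hDD' : D' = (Zj : A) * D * ((Zj⁻¹ : Aˣ) : A) := by
    rw [hZD, mul_assoc, hZinv', mul_one]
  have hE1 : Dinv' * D' = 1 := by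
    rw [hDD', hDinv'def]
    calc (Zj : A) * Dinv * ((Zj⁻¹ : Aˣ) : A) * ((Zj : A) * D * ((Zj⁻¹ : Aˣ) : A))
        = (Zj : A) * (Dinv * ((((Zj⁻¹ : Aˣ) : A) * (Zj : A)) * D)) * ((Zj⁻¹ : Aˣ) : A) := by
          noncomm_ring
      _ = 1 := by rw [hZinv, one_mul, hD1, mul_one, hZinv']
  have hE2 : D' * Dinv' = 1 := by
    rw [hDD', hDinv'def]
    calc (Zj : A) * D * ((Zj⁻¹ : Aˣ) : A) * ((Zj : A) * Dinv * ((Zj⁻¹ : Aˣ) : A))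
        = (Zj : A) * (D * ((((Zj⁻¹ : Aˣ) : A) * (Zj : A)) * Dinv)) * ((Zj⁻¹ : Aˣ) : A) := by
          noncomm_ring
      _ = 1 := by rw [hZinv, one_mul, hD2, mul_one, hZinv']
  have hZDinv : (Zj : A) * Dinv = Dinv' * Zj := by
    calc (Zj : A) * Dinv = Dinv' * (D' * ((Zj : A) * Dinv)) := by
          rw [← mul_assoc, hE1, one_mul]
      _ = Dinv' * ((Zj : A) * D * Dinv) := by rw [← mul_assoc D', ← hZD]
      _ = Dinv' * Zj := by rw [mul_assoc (Zj : A) D Dinv, hD2, mul_one]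
  have hYDinv : (Yj : A) * Dinv = q ^ 2 • (Dinv' * Yj) := by
    calc (Yj : A) * Dinv = Dinv' * (D' * ((Yj : A) * Dinv)) := by
          rw [← mul_assoc, hE1, one_mul]
      _ = Dinv' * (q ^ 2 • ((Yj : A) * D) * Dinv) := by rw [← mul_assoc D', hYD]
      _ = q ^ 2 • (Dinv' * ((Yj : A) * (D * Dinv))) := by
          rw [smul_mul_assoc, mul_smul_comm, mul_assoc (Yj : A) D Dinv]
      _ = q ^ 2 • (Dinv' * Yj) := by rw [hD2, mul_one]
  have key : (Zj : A) * Dinv * Yj = (Yj : A) * Dinv * Zj := by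
    rw [hZDinv, hYDinv, mul_assoc, hj, mul_smul_comm, smul_mul_assoc, ← mul_assoc]
  calc (Dinv * Zj) * (b • (Dinv * Yj))
      = b • (Dinv * ((Zj : A) * Dinv * Yj)) := by
        rw [mul_smul_comm]; noncomm_ring
    _ = b • (Dinv * ((Yj : A) * Dinv * Zj)) := by rw [key]
    _ = (b • (Dinv * Yj)) * (Dinv * Zj) := by
        rw [smul_mul_assoc]; noncomm_ring
end

section
/- With the same setup, Z_i' = bD⁻¹Y_i and Z_j' = bD⁻¹Y_j commute: Z_i'Z_j' = Z_j'Z_i'. -/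
theorem stmt7 {A : Type*} [Ring A] [Algebra ℂ A]
    (Yi Zi Yj Zj : Aˣ) (q b : ℂ) (hq : q ≠ 0) (hb : b ≠ 0)
    (hYY : (Yi : A) * Yj = (Yj : A) * Yi)
    (hZZ : (Zi : A) * Zj = (Zj : A) * Zi)
    (hYZ : (Yi : A) * Zj = (Zj : A) * Yi)
    (hYZ' : (Yj : A) * Zi = (Zi : A) * Yj)
    (hi : (Zi : A) * Yi = q ^ 2 • ((Yi : A) * Zi))
    (hj : (Zj : A) * Yj = q ^ 2 • ((Yj : A) * Zj))
    (Dinv : A)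
    (hD1 : Dinv * (b • ((Yi : A) * Yj) + (Zi : A) * Zj) = 1)
    (hD2 : (b • ((Yi : A) * Yj) + (Zi : A) * Zj) * Dinv = 1) :
    (b • (Dinv * Yi)) * (b • (Dinv * Yj)) = (b • (Dinv * Yj)) * (b • (Dinv * Yi)) := by
  set D : A := b • ((Yi : A) * Yj) + (Zi : A) * Zj with hDdef
  -- commuting facts with inverses
  have cYY : ((Yi⁻¹ : Aˣ) : A) * ((Yj⁻¹ : Aˣ) : A) = ((Yj⁻¹ : Aˣ) : A) * ((Yi⁻¹ : Aˣ) : A) :=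
    (((show Commute (Yi:A) (Yj:A) from hYY).units_inv_left).units_inv_right).eq
  have cZZinv : (Zj : A) * (Zi : A) = (Zi : A) * (Zj : A) := hZZ.symm
  have cYiZj : ((Yi⁻¹ : Aˣ) : A) * (Zj : A) = (Zj : A) * ((Yi⁻¹ : Aˣ) : A) :=
    ((show Commute (Yi:A) (Zj:A) from hYZ).units_inv_left).eq
  have cYjZi : ((Yj⁻¹ : Aˣ) : A) * (Zi : A) = (Zi : A) * ((Yj⁻¹ : Aˣ) : A) :=
    ((show Commute (Yj:A) (Zi:A) from hYZ').units_inv_left).eq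
  -- q-commutation with inverses
  have qYi : ((Yi⁻¹ : Aˣ) : A) * (Zi : A) = q ^ 2 • ((Zi : A) * ((Yi⁻¹ : Aˣ) : A)) := by
    have : ((Yi⁻¹ : Aˣ) : A) * ((Zi : A) * (Yi : A)) * ((Yi⁻¹ : Aˣ) : A)
        = ((Yi⁻¹ : Aˣ) : A) * (q ^ 2 • ((Yi : A) * (Zi : A))) * ((Yi⁻¹ : Aˣ) : A) := by
      rw [hi]
    calc ((Yi⁻¹ : Aˣ) : A) * (Zi : A)
        = ((Yi⁻¹ : Aˣ) : A) * ((Zi : A) * (Yi : A)) * ((Yi⁻¹ : Aˣ) : A) := by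
          rw [mul_assoc, mul_assoc, Units.mul_inv, mul_one]
      _ = ((Yi⁻¹ : Aˣ) : A) * (q ^ 2 • ((Yi : A) * (Zi : A))) * ((Yi⁻¹ : Aˣ) : A) := this
      _ = q ^ 2 • ((Zi : A) * ((Yi⁻¹ : Aˣ) : A)) := by
          rw [mul_smul_comm, smul_mul_assoc, ← mul_assoc, Units.inv_mul, one_mul]
  have qYj : ((Yj⁻¹ : Aˣ) : A) * (Zj : A) = q ^ 2 • ((Zj : A) * ((Yj⁻¹ : Aˣ) : A)) := by
    have : ((Yj⁻¹ : Aˣ) : A) * ((Zj : A) * (Yj : A)) * ((Yj⁻¹ : Aˣ) : A)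
        = ((Yj⁻¹ : Aˣ) : A) * (q ^ 2 • ((Yj : A) * (Zj : A))) * ((Yj⁻¹ : Aˣ) : A) := by
      rw [hj]
    calc ((Yj⁻¹ : Aˣ) : A) * (Zj : A)
        = ((Yj⁻¹ : Aˣ) : A) * ((Zj : A) * (Yj : A)) * ((Yj⁻¹ : Aˣ) : A) := by
          rw [mul_assoc, mul_assoc, Units.mul_inv, mul_one]
      _ = ((Yj⁻¹ : Aˣ) : A) * (q ^ 2 • ((Yj : A) * (Zj : A))) * ((Yj⁻¹ : Aˣ) : A) := this
      _ = q ^ 2 • ((Zj : A) * ((Yj⁻¹ : Aˣ) : A)) := by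
          rw [mul_smul_comm, smul_mul_assoc, ← mul_assoc, Units.inv_mul, one_mul]
  -- key symmetry:  Yi⁻¹ D Yj⁻¹ = Yj⁻¹ D Yi⁻¹
  have key : ((Yi⁻¹ : Aˣ) : A) * D * ((Yj⁻¹ : Aˣ) : A)
      = ((Yj⁻¹ : Aˣ) : A) * D * ((Yi⁻¹ : Aˣ) : A) := by
    have L : ((Yi⁻¹ : Aˣ) : A) * D * ((Yj⁻¹ : Aˣ) : A)
        = b • (1 : A) + q ^ 2 • ((Zi : A) * (Zj : A) * (((Yi⁻¹ : Aˣ) : A) * ((Yj⁻¹ : Aˣ) : A))) := by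
      rw [hDdef, mul_add, add_mul, mul_smul_comm, smul_mul_assoc]
      congr 1
      · congr 1
        simp [mul_assoc]
      · calc ((Yi⁻¹ : Aˣ) : A) * ((Zi : A) * (Zj : A)) * ((Yj⁻¹ : Aˣ) : A)
            = (((Yi⁻¹ : Aˣ) : A) * (Zi : A)) * ((Zj : A) * ((Yj⁻¹ : Aˣ) : A)) := by
              rw [mul_assoc, mul_assoc, mul_assoc]
          _ = (q ^ 2 • ((Zi : A) * ((Yi⁻¹ : Aˣ) : A))) * ((Zj : A) * ((Yj⁻¹ : Aˣ) : A)) := by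
              rw [qYi]
          _ = q ^ 2 • ((Zi : A) * (Zj : A) * (((Yi⁻¹ : Aˣ) : A) * ((Yj⁻¹ : Aˣ) : A))) := by
              rw [smul_mul_assoc]
              congr 1
              rw [mul_assoc, ← mul_assoc ((Yi⁻¹ : Aˣ) : A), cYiZj, mul_assoc, ← mul_assoc,
                ← mul_assoc]
    have R : ((Yj⁻¹ : Aˣ) : A) * D * ((Yi⁻¹ : Aˣ) : A)
        = b • (1 : A) + q ^ 2 • ((Zi : A) * (Zj : A) * (((Yi⁻¹ : Aˣ) : A) * ((Yj⁻¹ : Aˣ) : A))) := by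
      rw [hDdef, mul_add, add_mul, mul_smul_comm, smul_mul_assoc]
      congr 1
      · rw [hYY]
        congr 1
        simp [mul_assoc]
      · calc ((Yj⁻¹ : Aˣ) : A) * ((Zi : A) * (Zj : A)) * ((Yi⁻¹ : Aˣ) : A)
            = ((Yj⁻¹ : Aˣ) : A) * ((Zj : A) * (Zi : A)) * ((Yi⁻¹ : Aˣ) : A) := by rw [hZZ]
          _ = (((Yj⁻¹ : Aˣ) : A) * (Zj : A)) * ((Zi : A) * ((Yi⁻¹ : Aˣ) : A)) := by
              rw [mul_assoc, mul_assoc, mul_assoc]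
          _ = (q ^ 2 • ((Zj : A) * ((Yj⁻¹ : Aˣ) : A))) * ((Zi : A) * ((Yi⁻¹ : Aˣ) : A)) := by
              rw [qYj]
          _ = q ^ 2 • ((Zi : A) * (Zj : A) * (((Yi⁻¹ : Aˣ) : A) * ((Yj⁻¹ : Aˣ) : A))) := by
              rw [smul_mul_assoc]
              congr 1
              rw [mul_assoc, ← mul_assoc ((Yj⁻¹ : Aˣ) : A), cYjZi, mul_assoc, ← mul_assoc,
                ← mul_assoc, cZZinv, cYY, mul_assoc (↑Zi * ↑Zj : A)]
    rw [L, R]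
  -- from key, derive Yi * Dinv * Yj = Yj * Dinv * Yi
  have h1 : ((Yi : A) * Dinv * (Yj : A)) * (((Yj⁻¹ : Aˣ) : A) * D * ((Yi⁻¹ : Aˣ) : A)) = 1 := by
    calc ((Yi : A) * Dinv * (Yj : A)) * (((Yj⁻¹ : Aˣ) : A) * D * ((Yi⁻¹ : Aˣ) : A))
        = (Yi : A) * (Dinv * (((Yj : A) * ((Yj⁻¹ : Aˣ) : A)) * D)) * ((Yi⁻¹ : Aˣ) : A) := by
          noncomm_ring
      _ = 1 := by rw [Units.mul_inv, one_mul, hD1]; simp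
  have h2 : (((Yi⁻¹ : Aˣ) : A) * D * ((Yj⁻¹ : Aˣ) : A)) * ((Yj : A) * Dinv * (Yi : A)) = 1 := by
    calc (((Yi⁻¹ : Aˣ) : A) * D * ((Yj⁻¹ : Aˣ) : A)) * ((Yj : A) * Dinv * (Yi : A))
        = ((Yi⁻¹ : Aˣ) : A) * ((D * (((Yj⁻¹ : Aˣ) : A) * (Yj : A))) * Dinv) * (Yi : A) := by
          noncomm_ring
      _ = 1 := by rw [Units.inv_mul, mul_one, hD2]; simp
  have hsym : (Yi : A) * Dinv * (Yj : A) = (Yj : A) * Dinv * (Yi : A) := by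
    calc (Yi : A) * Dinv * (Yj : A)
        = ((Yi : A) * Dinv * (Yj : A)) *
            ((((Yi⁻¹ : Aˣ) : A) * D * ((Yj⁻¹ : Aˣ) : A)) * ((Yj : A) * Dinv * (Yi : A))) := by
          rw [h2, mul_one]
      _ = (((Yi : A) * Dinv * (Yj : A)) * (((Yj⁻¹ : Aˣ) : A) * D * ((Yi⁻¹ : Aˣ) : A))) *
            ((Yj : A) * Dinv * (Yi : A)) := by rw [key]; noncomm_ring
      _ = (Yj : A) * Dinv * (Yi : A) := by rw [h1, one_mul]
  calc (b • (Dinv * (Yi : A))) * (b • (Dinv * (Yj : A)))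
      = (b * b) • (Dinv * ((Yi : A) * Dinv * (Yj : A))) := by
        rw [smul_mul_assoc, mul_smul_comm, smul_smul]; congr 1; noncomm_ring
    _ = (b * b) • (Dinv * ((Yj : A) * Dinv * (Yi : A))) := by rw [hsym]
    _ = (b • (Dinv * (Yj : A))) * (b • (Dinv * (Yi : A))) := by
        rw [smul_mul_assoc, mul_smul_comm, smul_smul]; congr 1; noncomm_ring
end

section
/- Let q, b be nonzero complex numbers and let Y_μ, Z_μ, Y_ν, Z_ν be units in a ℂ-algebra satisfying Kashaev relations, with D = bY_μY_ν + Z_μZ_ν invertible. If b = q³ then Z_ν⁻¹ D Z_μ⁻¹ D = (1 + q·Y_μY_νZ_ν⁻¹Z_μ⁻¹)(1 + q³·Y_μY_νZ_ν⁻¹Z_μ⁻¹) Z_μZ_ν. -/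
private lemma aux_inv {A : Type*} [Ring A] [Algebra ℂ A] (u : Aˣ) (y : A) (c : ℂ) (hc : c ≠ 0)
    (h : (u : A) * y = c • (y * u)) : (↑u⁻¹ : A) * y = c⁻¹ • (y * ↑u⁻¹) := by
  have h2 : y * ↑u⁻¹ = c • ((↑u⁻¹ : A) * y) := by
    calc y * ↑u⁻¹ = ↑u⁻¹ * ((u : A) * y) * ↑u⁻¹ := by
          rw [← mul_assoc, Units.inv_mul, one_mul]
      _ = ↑u⁻¹ * (c • (y * u)) * ↑u⁻¹ := by rw [h]
      _ = c • ((↑u⁻¹ : A) * y) := by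
          rw [mul_smul_comm, smul_mul_assoc, mul_assoc, mul_assoc, Units.mul_inv, mul_one]
  rw [h2, smul_smul, inv_mul_cancel₀ hc, one_smul]

theorem stmt11 {A : Type*} [Ring A] [Algebra ℂ A]
    (Ym Zm Yn Zn : Aˣ) (q b : ℂ) (hq : q ≠ 0) (hb : b = q ^ 3)
    (hYY : (Ym : A) * Yn = (Yn : A) * Ym)
    (hZZ : (Zm : A) * Zn = (Zn : A) * Zm)
    (hYZ : (Ym : A) * Zn = (Zn : A) * Ym)
    (hYZ' : (Yn : A) * Zm = (Zm : A) * Yn)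
    (hm : (Zm : A) * Ym = q ^ 2 • ((Ym : A) * Zm))
    (hn : (Zn : A) * Yn = q ^ 2 • ((Yn : A) * Zn)) :
    (↑Zn⁻¹ : A) * (b • ((Ym : A) * Yn) + (Zm : A) * Zn) * ↑Zm⁻¹ *
        (b • ((Ym : A) * Yn) + (Zm : A) * Zn) =
      (1 + q • ((Ym : A) * Yn * ↑Zn⁻¹ * ↑Zm⁻¹)) *
        (1 + q ^ 3 • ((Ym : A) * Yn * ↑Zn⁻¹ * ↑Zm⁻¹)) * ((Zm : A) * Zn) := by
  subst hb
  have hq2 : (q : ℂ) ^ 2 ≠ 0 := pow_ne_zero 2 hq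
  -- commutation facts
  have cYZ : Commute (Ym : A) (Zn : A) := hYZ
  have cYZ' : Commute (Yn : A) (Zm : A) := hYZ'
  have cZZ : Commute (Zm : A) (Zn : A) := hZZ
  have s1 : (Yn : A) * Ym = (Ym : A) * Yn := hYY.symm
  have s1' : ∀ t : A, (Yn : A) * ((Ym : A) * t) = (Ym : A) * ((Yn : A) * t) := fun t => by
    rw [← mul_assoc, s1, mul_assoc]
  have s2 : (↑Zn⁻¹ : A) * Ym = (Ym : A) * ↑Zn⁻¹ := (cYZ.units_inv_right).eq.symm
  have s2' : ∀ t : A, (↑Zn⁻¹ : A) * ((Ym : A) * t) = (Ym : A) * (↑Zn⁻¹ * t) := fun t => by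
    rw [← mul_assoc, s2, mul_assoc]
  have s3 : (Zn : A) * Ym = (Ym : A) * Zn := hYZ.symm
  have s3' : ∀ t : A, (Zn : A) * ((Ym : A) * t) = (Ym : A) * ((Zn : A) * t) := fun t => by
    rw [← mul_assoc, s3, mul_assoc]
  have s4 : (↑Zm⁻¹ : A) * Yn = (Yn : A) * ↑Zm⁻¹ := (cYZ'.units_inv_right).eq.symm
  have s4' : ∀ t : A, (↑Zm⁻¹ : A) * ((Yn : A) * t) = (Yn : A) * (↑Zm⁻¹ * t) := fun t => by
    rw [← mul_assoc, s4, mul_assoc]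
  have s5 : (Zm : A) * Yn = (Yn : A) * Zm := hYZ'.symm
  have s5' : ∀ t : A, (Zm : A) * ((Yn : A) * t) = (Yn : A) * ((Zm : A) * t) := fun t => by
    rw [← mul_assoc, s5, mul_assoc]
  have s6 : (↑Zn⁻¹ : A) * ↑Zm⁻¹ = (↑Zm⁻¹ : A) * ↑Zn⁻¹ :=
    ((cZZ.units_inv_left).units_inv_right).eq.symm
  have s6' : ∀ t : A, (↑Zn⁻¹ : A) * ((↑Zm⁻¹ : A) * t) = (↑Zm⁻¹ : A) * (↑Zn⁻¹ * t) := fun t => by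
    rw [← mul_assoc, s6, mul_assoc]
  have s7 : (Zn : A) * ↑Zm⁻¹ = (↑Zm⁻¹ : A) * Zn := (cZZ.units_inv_left).eq.symm
  have s7' : ∀ t : A, (Zn : A) * ((↑Zm⁻¹ : A) * t) = (↑Zm⁻¹ : A) * ((Zn : A) * t) := fun t => by
    rw [← mul_assoc, s7, mul_assoc]
  have s8 : (↑Zn⁻¹ : A) * Zm = (Zm : A) * ↑Zn⁻¹ := (cZZ.units_inv_right).eq.symm
  have s8' : ∀ t : A, (↑Zn⁻¹ : A) * ((Zm : A) * t) = (Zm : A) * (↑Zn⁻¹ * t) := fun t => by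
    rw [← mul_assoc, s8, mul_assoc]
  have s9 : (Zn : A) * Zm = (Zm : A) * Zn := hZZ.symm
  have s9' : ∀ t : A, (Zn : A) * ((Zm : A) * t) = (Zm : A) * ((Zn : A) * t) := fun t => by
    rw [← mul_assoc, s9, mul_assoc]
  have c1 : (Zm : A) * Ym = q ^ 2 • ((Ym : A) * Zm) := hm
  have c1' : ∀ t : A, (Zm : A) * ((Ym : A) * t) = q ^ 2 • ((Ym : A) * ((Zm : A) * t)) :=
    fun t => by rw [← mul_assoc, c1, smul_mul_assoc, mul_assoc]
  have c2 : (↑Zm⁻¹ : A) * Ym = (q ^ 2)⁻¹ • ((Ym : A) * ↑Zm⁻¹) := aux_inv Zm Ym _ hq2 hm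
  have c2' : ∀ t : A, (↑Zm⁻¹ : A) * ((Ym : A) * t) = (q ^ 2)⁻¹ • ((Ym : A) * (↑Zm⁻¹ * t)) :=
    fun t => by rw [← mul_assoc, c2, smul_mul_assoc, mul_assoc]
  have c3 : (Zn : A) * Yn = q ^ 2 • ((Yn : A) * Zn) := hn
  have c3' : ∀ t : A, (Zn : A) * ((Yn : A) * t) = q ^ 2 • ((Yn : A) * ((Zn : A) * t)) :=
    fun t => by rw [← mul_assoc, c3, smul_mul_assoc, mul_assoc]
  have c4 : (↑Zn⁻¹ : A) * Yn = (q ^ 2)⁻¹ • ((Yn : A) * ↑Zn⁻¹) := aux_inv Zn Yn _ hq2 hn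
  have c4' : ∀ t : A, (↑Zn⁻¹ : A) * ((Yn : A) * t) = (q ^ 2)⁻¹ • ((Yn : A) * (↑Zn⁻¹ * t)) :=
    fun t => by rw [← mul_assoc, c4, smul_mul_assoc, mul_assoc]
  simp only [mul_add, add_mul, smul_add, smul_mul_assoc, mul_smul_comm, smul_smul, mul_assoc,
    one_mul, mul_one, s1, s1', s2, s2', s3, s3', s4, s4', s5, s5', s6, s6', s7, s7', s8, s8',
    s9, s9', c1, c1', c2, c2', c3, c3', c4, c4',
    Units.inv_mul, Units.mul_inv, Units.inv_mul_cancel_left, Units.mul_inv_cancel_left]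
  match_scalars <;> field_simp <;> ring
end

section
/- With Kashaev relations and D = bY_μY_ν + Z_μZ_ν invertible, set X_i' := Y_μ'Z_μ'⁻¹Y_ν'Z_ν'⁻¹ where Y_μ' = D⁻¹Z_ν, Z_μ' = bD⁻¹Y_μ, Y_ν' = D⁻¹Z_μ, Z_ν' = bD⁻¹Y_ν. Then X_i' = b⁻²q⁶ (Y_μZ_μ⁻¹Y_νZ_ν⁻¹)⁻¹. In particular, when b = q³, X_i' = X_i⁻¹ with X_i = Y_μZ_μ⁻¹Y_νZ_ν⁻¹. -/
/-!
Put `U = Y_μ Y_ν` and `W = Z_μ Z_ν`. The Kashaev relations give `W U = q⁴ U W`, while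
`X_i⁻¹ = W U⁻¹` and `D = b U + W`; hence `X_i⁻¹ D = q⁴ D X_i⁻¹`.
Since `Z_μ'⁻¹ = b⁻¹ Y_μ⁻¹ D` and `Z_ν'⁻¹ = b⁻¹ Y_ν⁻¹ D`, the inner factors `D D⁻¹` cancel:
`X_i' = b⁻² D⁻¹ (Z_ν Y_μ⁻¹ Z_μ Y_ν⁻¹) D = b⁻² q² D⁻¹ X_i⁻¹ D = b⁻² q⁶ X_i⁻¹`.
-/

theorem mul_inv_mul_mul_inv_inv_of_commute {G : Type*} [Group G] {a b c d : G}
    (hbc : Commute b c) (hcd : Commute c d) :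
    (a * c⁻¹ * b * d⁻¹)⁻¹ = c * d * (a * b)⁻¹ := by
  rw [mul_assoc a, hbc.inv_right.symm.eq, ← mul_assoc, mul_assoc, ← mul_inv_rev, ← hcd.eq]
  simp [mul_assoc]

section SkewCommute

variable {R A : Type*} [CommSemiring R] [Semiring A] [Algebra R A]

theorem Units.inv_mul_eq_smul_mul_inv {u : Aˣ} {w : A} {c : R} (h : w * u = c • (u * w)) :
    ↑u⁻¹ * w = c • (w * ↑u⁻¹) := by
  calc ↑u⁻¹ * w = ↑u⁻¹ * (w * u) * ↑u⁻¹ := by simp [mul_assoc]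
    _ = c • (w * ↑u⁻¹) := by rw [h, mul_smul_comm, smul_mul_assoc, u.inv_mul_cancel_left]

theorem mul_mul_mul_eq_smul_of_skewCommute {y₁ y₂ z₁ z₂ : A} {c₁ c₂ : R}
    (h₁ : z₁ * y₁ = c₁ • (y₁ * z₁)) (h₂ : z₂ * y₂ = c₂ • (y₂ * z₂))
    (h₁₂ : y₁ * z₂ = z₂ * y₁) (h₂₁ : y₂ * z₁ = z₁ * y₂) :
    z₁ * z₂ * (y₁ * y₂) = (c₁ * c₂) • (y₁ * y₂ * (z₁ * z₂)) := by
  calc z₁ * z₂ * (y₁ * y₂) = z₁ * y₁ * (z₂ * y₂) := by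
        rw [mul_assoc, ← mul_assoc z₂, ← h₁₂, mul_assoc, mul_assoc]
    _ = (c₁ * c₂) • (y₁ * (z₁ * y₂) * z₂) := by
        rw [h₁, h₂, smul_mul_smul_comm, mul_assoc, mul_assoc, mul_assoc]
    _ = (c₁ * c₂) • (y₁ * y₂ * (z₁ * z₂)) := by
        rw [← h₂₁, mul_assoc, mul_assoc, mul_assoc]

theorem mul_inv_mul_add_eq_smul {u : Aˣ} {w : A} {c : R} (b : R) (h : w * u = c • (u * w)) :
    w * ↑u⁻¹ * (b • ↑u + w) = c • ((b • ↑u + w) * (w * ↑u⁻¹)) := by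
  have hconj : c • (↑u * (w * ↑u⁻¹)) = w := by
    rw [← mul_assoc, ← smul_mul_assoc, ← h, mul_assoc, u.mul_inv, mul_one]
  rw [mul_add, add_mul, mul_smul_comm, mul_assoc, u.inv_mul, mul_one, mul_assoc,
    Units.inv_mul_eq_smul_mul_inv h, smul_add, smul_mul_assoc, smul_comm c b, hconj,
    mul_smul_comm]

theorem units_mul_inv_mul_mul_inv_eq_smul {y₁ y₂ z₁ z₂ : Aˣ} {c : R}
    (h₁ : (z₁ : A) * y₁ = c • ((y₁ : A) * z₁)) (hy : Commute y₁ y₂) (hz : Commute z₁ z₂) :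
    (z₂ : A) * ↑y₁⁻¹ * z₁ * ↑y₂⁻¹ = c • ↑(z₁ * z₂ * (y₁ * y₂)⁻¹) := by
  rw [hz.eq, hy.mul_inv, ← mul_assoc, mul_assoc (z₂ : A), Units.inv_mul_eq_smul_mul_inv h₁]
  simp only [Units.val_mul, mul_smul_comm, smul_mul_assoc, mul_assoc]

end SkewCommute

theorem eq_inv_smul_units_inv_mul {K A : Type*} [Field K] [Semiring A] [Algebra K A]
    {d d' w : A} (y : Aˣ) {b : K} (hb : b ≠ 0) (hd : d' * d = 1)
    (hw : w * (b • (d' * y)) = 1) :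
    w = b⁻¹ • (↑y⁻¹ * d) :=
  left_inv_eq_right_inv hw <| by
    rw [smul_mul_smul_comm, mul_inv_cancel₀ hb, one_smul, mul_assoc, y.mul_inv_cancel_left, hd]

theorem stmt13_general {A : Type*} [Ring A] [Algebra ℂ A]
    (Ym Zm Yn Zn : Aˣ) (q b : ℂ) (hb : b ≠ 0)
    (hYY : (Ym : A) * Yn = (Yn : A) * Ym)
    (hZZ : (Zm : A) * Zn = (Zn : A) * Zm)
    (hYZ : (Ym : A) * Zn = (Zn : A) * Ym)
    (hYZ' : (Yn : A) * Zm = (Zm : A) * Yn)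
    (hm : (Zm : A) * Ym = q ^ 2 • ((Ym : A) * Zm))
    (hn : (Zn : A) * Yn = q ^ 2 • ((Yn : A) * Zn))
    (Dinv : A)
    (hD1 : Dinv * (b • ((Ym : A) * Yn) + (Zm : A) * Zn) = 1)
    (hD2 : (b • ((Ym : A) * Yn) + (Zm : A) * Zn) * Dinv = 1)
    (Wm Wn : A)
    (hWm2 : Wm * (b • (Dinv * Ym)) = 1)
    (hWn2 : Wn * (b • (Dinv * Yn)) = 1) :
    (Dinv * Zn) * Wm * (Dinv * Zm) * Wn =
        (b⁻¹ ^ 2 * q ^ 6) • (↑((Ym * Zm⁻¹ * Yn * Zn⁻¹)⁻¹) : A) ∧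
    (b = q ^ 3 →
      (Dinv * Zn) * Wm * (Dinv * Zm) * Wn = (↑((Ym * Zm⁻¹ * Yn * Zn⁻¹)⁻¹) : A)) := by
  set D := b • ((Ym : A) * Yn) + (Zm : A) * Zn with hD
  have hDD : ∀ x, D * (Dinv * x) = x := fun x => by rw [← mul_assoc, hD2, one_mul]
  have hXinv : (Ym * Zm⁻¹ * Yn * Zn⁻¹)⁻¹ = Zm * Zn * (Ym * Yn)⁻¹ :=
    mul_inv_mul_mul_inv_inv_of_commute (Units.ext hYZ') (Units.ext hZZ)
  have hmid : (Zn : A) * ↑Ym⁻¹ * Zm * ↑Yn⁻¹ = q ^ 2 • ↑(Zm * Zn * (Ym * Yn)⁻¹) :=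
    units_mul_inv_mul_mul_inv_eq_smul hm (Units.ext hYY) (Units.ext hZZ)
  have hconj : ↑(Zm * Zn * (Ym * Yn)⁻¹) * D =
      (q ^ 2 * q ^ 2) • (D * ↑(Zm * Zn * (Ym * Yn)⁻¹)) := by
    simpa [hD] using mul_inv_mul_add_eq_smul (u := Ym * Yn) b
      (mul_mul_mul_eq_smul_of_skewCommute hm hn hYZ hYZ')
  have hLHS : (Dinv * Zn) * Wm * (Dinv * Zm) * Wn =
      (b⁻¹ ^ 2 * q ^ 6) • (↑((Ym * Zm⁻¹ * Yn * Zn⁻¹)⁻¹) : A) := by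
    rw [eq_inv_smul_units_inv_mul Ym hb hD1 hWm2, eq_inv_smul_units_inv_mul Yn hb hD1 hWn2]
    calc Dinv * Zn * b⁻¹ • (↑Ym⁻¹ * D) * (Dinv * Zm) * b⁻¹ • (↑Yn⁻¹ * D)
        = (b⁻¹ ^ 2) • (Dinv * ((Zn : A) * ↑Ym⁻¹ * Zm * ↑Yn⁻¹) * D) := by
          simp only [smul_mul_assoc, mul_smul_comm, smul_smul, mul_assoc, hDD, sq]
      _ = (b⁻¹ ^ 2 * q ^ 2) • (Dinv * (↑(Zm * Zn * (Ym * Yn)⁻¹) * D)) := by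
          rw [hmid, mul_assoc, smul_mul_assoc, mul_smul_comm, smul_smul]
      _ = (b⁻¹ ^ 2 * q ^ 6) • (↑((Ym * Zm⁻¹ * Yn * Zn⁻¹)⁻¹) : A) := by
          rw [hconj, mul_smul_comm, smul_smul, ← mul_assoc Dinv, hD1, one_mul, hXinv]
          congr 1
          ring
  refine ⟨hLHS, fun hbq => ?_⟩
  rw [hLHS, show q ^ 6 = b ^ 2 by rw [hbq]; ring, inv_pow, inv_mul_cancel₀ (pow_ne_zero 2 hb),
    one_smul]

theorem stmt13 {A : Type*} [Ring A] [Algebra ℂ A]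
    (Ym Zm Yn Zn : Aˣ) (q b : ℂ) (hq : q ≠ 0) (hb : b ≠ 0)
    (hYY : (Ym : A) * Yn = (Yn : A) * Ym)
    (hZZ : (Zm : A) * Zn = (Zn : A) * Zm)
    (hYZ : (Ym : A) * Zn = (Zn : A) * Ym)
    (hYZ' : (Yn : A) * Zm = (Zm : A) * Yn)
    (hm : (Zm : A) * Ym = q ^ 2 • ((Ym : A) * Zm))
    (hn : (Zn : A) * Yn = q ^ 2 • ((Yn : A) * Zn))
    (Dinv : A)
    (hD1 : Dinv * (b • ((Ym : A) * Yn) + (Zm : A) * Zn) = 1)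
    (hD2 : (b • ((Ym : A) * Yn) + (Zm : A) * Zn) * Dinv = 1)
    (Wm Wn : A)
    (hWm1 : (b • (Dinv * Ym)) * Wm = 1) (hWm2 : Wm * (b • (Dinv * Ym)) = 1)
    (hWn1 : (b • (Dinv * Yn)) * Wn = 1) (hWn2 : Wn * (b • (Dinv * Yn)) = 1) :
    (Dinv * Zn) * Wm * (Dinv * Zm) * Wn =
        (b⁻¹ ^ 2 * q ^ 6) • (↑((Ym * Zm⁻¹ * Yn * Zn⁻¹)⁻¹) : A) ∧
    (b = q ^ 3 →
      (Dinv * Zn) * Wm * (Dinv * Zm) * Wn = (↑((Ym * Zm⁻¹ * Yn * Zn⁻¹)⁻¹) : A)) :=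
  stmt13_general Ym Zm Yn Zn q b hb hYY hZZ hYZ hYZ' hm hn Dinv hD1 hD2 Wm Wn hWm2 hWn2
end

section
/- Diagonal exchange compatibility forces b = q³: with Kashaev relations on Y_μ, Z_μ, Y_ν, Z_ν, one has Z_ν(1 + q·Y_μZ_μ⁻¹Y_νZ_ν⁻¹)Z_μ = Z_μZ_ν + q³Y_μY_ν. Consequently, if bY_μY_ν + Z_μZ_ν = Z_ν(1 + qY_μZ_μ⁻¹Y_νZ_ν⁻¹)Z_μ in an algebra where Y_μY_ν and Z_μZ_ν are linearly independent over ℂ, then b = q³. -/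
theorem stmt15 {A : Type*} [Ring A] [Algebra ℂ A]
    (Ym Zm Yn Zn : Aˣ) (q b : ℂ) (hq : q ≠ 0) (hb : b ≠ 0)
    (hYY : (Ym : A) * Yn = (Yn : A) * Ym)
    (hZZ : (Zm : A) * Zn = (Zn : A) * Zm)
    (hYZ : (Ym : A) * Zn = (Zn : A) * Ym)
    (hYZ' : (Yn : A) * Zm = (Zm : A) * Yn)
    (hm : (Zm : A) * Ym = q ^ 2 • ((Ym : A) * Zm))
    (hn : (Zn : A) * Yn = q ^ 2 • ((Yn : A) * Zn)) :
    ((Zn : A) * (1 + q • ((Ym : A) * ↑Zm⁻¹ * Yn * ↑Zn⁻¹)) * Zm =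
        (Zm : A) * Zn + q ^ 3 • ((Ym : A) * Yn)) ∧
    (LinearIndependent ℂ ![(Ym : A) * Yn, (Zm : A) * Zn] →
      b • ((Ym : A) * Yn) + (Zm : A) * Zn =
        (Zn : A) * (1 + q • ((Ym : A) * ↑Zm⁻¹ * Yn * ↑Zn⁻¹)) * Zm →
      b = q ^ 3) := by
  -- inverse commutation lemmas
  have hinv1 : (↑Zm⁻¹ : A) * Yn = (Yn : A) * ↑Zm⁻¹ := by
    have h := congrArg (fun x => (↑Zm⁻¹ : A) * x * ↑Zm⁻¹) hYZ'
    simpa [mul_assoc, Units.inv_mul, Units.mul_inv] using h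
  have hinv2 : (↑Zn⁻¹ : A) * Zm = (Zm : A) * ↑Zn⁻¹ := by
    have h := congrArg (fun x => (↑Zn⁻¹ : A) * x * ↑Zn⁻¹) hZZ
    simpa [mul_assoc, Units.inv_mul, Units.mul_inv] using h
  have hinv3 : (Zn : A) * ↑Zm⁻¹ = (↑Zm⁻¹ : A) * Zn := by
    have h := congrArg (fun x => (↑Zm⁻¹ : A) * x * ↑Zm⁻¹) hZZ
    simpa [mul_assoc, Units.inv_mul, Units.mul_inv] using h
  have key : (Zn : A) * (1 + q • ((Ym : A) * ↑Zm⁻¹ * Yn * ↑Zn⁻¹)) * Zm =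
      (Zm : A) * Zn + q ^ 3 • ((Ym : A) * Yn) := by
    have main : (Zn : A) * ((Ym : A) * ↑Zm⁻¹ * Yn * ↑Zn⁻¹) * Zm
        = q ^ 2 • ((Ym : A) * Yn) := by
      calc (Zn : A) * ((Ym : A) * ↑Zm⁻¹ * Yn * ↑Zn⁻¹) * Zm
          = ((Zn : A) * Ym) * (↑Zm⁻¹ * Yn) * (↑Zn⁻¹ * Zm) := by
            noncomm_ring
        _ = ((Ym : A) * Zn) * ((Yn : A) * ↑Zm⁻¹) * ((Zm : A) * ↑Zn⁻¹) := by
            rw [← hYZ, hinv1, hinv2]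
        _ = (Ym : A) * ((Zn : A) * Yn) * (↑Zm⁻¹ * Zm) * ↑Zn⁻¹ := by
            noncomm_ring
        _ = (Ym : A) * (q ^ 2 • ((Yn : A) * Zn)) * (↑Zm⁻¹ * Zm) * ↑Zn⁻¹ := by rw [hn]
        _ = q ^ 2 • ((Ym : A) * Yn * ((Zn : A) * ↑Zn⁻¹)) := by
            simp [Units.inv_mul, mul_smul_comm, smul_mul_assoc, mul_assoc]
        _ = q ^ 2 • ((Ym : A) * Yn) := by simp [Units.mul_inv]
    have : (Zn : A) * (1 + q • ((Ym : A) * ↑Zm⁻¹ * Yn * ↑Zn⁻¹)) * Zm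
        = (Zn : A) * Zm + q • ((Zn : A) * ((Ym : A) * ↑Zm⁻¹ * Yn * ↑Zn⁻¹) * Zm) := by
      rw [mul_add, mul_one, add_mul, mul_smul_comm, smul_mul_assoc]
    rw [this, main, ← hZZ, smul_smul]
    ring_nf
  refine ⟨key, fun hLI heq => ?_⟩
  rw [key] at heq
  have hz : (b - q ^ 3) • ((Ym : A) * Yn) + (0 : ℂ) • ((Zm : A) * Zn) = 0 := by
    rw [sub_smul, zero_smul, add_zero, sub_eq_zero]
    have := heq
    rw [add_comm ((Zm : A) * Zn)] at this
    exact add_right_cancel this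
  have h := Fintype.linearIndependent_iff.mp hLI ![b - q ^ 3, 0]
    (by simpa [Fin.sum_univ_two] using hz) 0
  simpa [sub_eq_zero] using h
end
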